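/- Let V be an n-dimensional complex Hermitian vector space with n ≥ 3 and 2 ≤ r ≤ n-2. Then there is no complex r-fold vector cross product on V. -/

import Mathlib

open Module

/-- Interior contraction of an alternating `(r+1)`-form `φ` by the `r`-vector
`e₁ ∧ ⋯ ∧ e_r`, as a continuous linear functional `v ↦ φ (e₁, …, e_r, v)` on `V`
(whose norm is the dual norm induced by the Hermitian metric). -/
noncomputable def contraction {V : Type*} [NormedAddCommGroup V] [InnerProductSpace ℂ V]
    [FiniteDimensional ℂ V] {r : ℕ} (φ : V [⋀^Fin (r + 1)]→ₗ[ℂ] ℂ) (e : Fin r → V) :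
    V →L[ℂ] ℂ :=
  LinearMap.toContinuousLinearMap (φ.toMultilinearMap.toLinearMap (Fin.snoc e 0) (Fin.last r))

/-- `φ ∈ ⋀^{r+1} V*` is a complex `r`-fold vector cross product if
`‖ι_{e₁ ∧ ⋯ ∧ e_r} φ‖ = 1` for every orthonormal family `e₁, …, e_r`. -/
def IsCrossProduct {V : Type*} [NormedAddCommGroup V] [InnerProductSpace ℂ V]
    [FiniteDimensional ℂ V] {r : ℕ} (φ : V [⋀^Fin (r + 1)]→ₗ[ℂ] ℂ) : Prop :=
  ∀ e : Fin r → V, Orthonormal ℂ e → ‖contraction φ e‖ = 1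

/-!
Fix an orthonormal family `e₁, …, e_{r-2}` and let `K = ⟨e⟩ᗮ`, of dimension `n - r + 2 ≥ 4`.
The vector `X(x, y)` representing `φ(e₁, …, e_{r-2}, x, y, ·)` is conjugate-bilinear,
alternating and lies in `K`, and the cross product axiom gives `‖X(x, y)‖ = ‖x‖ ‖y‖` for
orthogonal `x, y ∈ K`. Polarizing in `y` shows `X(x, y) ⊥ X(x, z)` for orthogonal `x, y, z`, and
polarizing once more in `x` shows `X(x₁, y₁) ⊥ X(x₂, y₂)` when the `xᵢ` are orthogonal to the `yⱼ`
and `y₁ ⊥ y₂`. So for an orthonormal basis `f` of `K` the vectors `X(f a, f b)`, `a < b`, are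
`m(m-1)/2` orthonormal vectors in `K`, where `m = dim K`; this forces `m ≤ 3`.
-/

open scoped InnerProductSpace ComplexConjugate

section Polarization

variable {E F : Type*} [NormedAddCommGroup E] [InnerProductSpace ℂ E]
  [NormedAddCommGroup F] [InnerProductSpace ℂ F]

theorem inner_map_map_of_norm_map_eq_mul (T : E →ₗ⋆[ℂ] F) {U : Submodule ℂ E} {c : ℝ}
    (hT : ∀ u ∈ U, ‖T u‖ = c * ‖u‖) {y z : E} (hy : y ∈ U) (hz : z ∈ U) :
    ⟪T y, T z⟫_ℂ = c ^ 2 * ⟪z, y⟫_ℂ := by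
  have h₁ : ‖T y + T z‖ = c * ‖y + z‖ := by rw [← map_add, hT _ (U.add_mem hy hz)]
  have h₂ : ‖T y - T z‖ = c * ‖y - z‖ := by rw [← map_sub, hT _ (U.sub_mem hy hz)]
  have h₃ : ‖T y - Complex.I • T z‖ = c * ‖y + Complex.I • z‖ := by
    rw [← hT _ (U.add_mem hy (U.smul_mem _ hz)), map_add, map_smulₛₗ, Complex.conj_I, neg_smul,
      sub_eq_add_neg]
  have h₄ : ‖T y + Complex.I • T z‖ = c * ‖y - Complex.I • z‖ := by
    rw [← hT _ (U.sub_mem hy (U.smul_mem _ hz)), map_sub, map_smulₛₗ, Complex.conj_I, neg_smul,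
      sub_neg_eq_add]
  have h₅ : ‖z - Complex.I • y‖ = ‖y + Complex.I • z‖ := by
    rw [show z - Complex.I • y = (-Complex.I) • (y + Complex.I • z) by
      rw [smul_add, smul_smul, neg_mul, Complex.I_mul_I]; module, norm_smul, norm_neg,
      Complex.norm_I, one_mul]
  have h₆ : ‖z + Complex.I • y‖ = ‖y - Complex.I • z‖ := by
    rw [show z + Complex.I • y = Complex.I • (y - Complex.I • z) by
      rw [smul_sub, smul_smul, Complex.I_mul_I]; module, norm_smul, Complex.norm_I, one_mul]
  rw [inner_eq_sum_norm_sq_div_four (T y), inner_eq_sum_norm_sq_div_four z, RCLike.I_to_complex,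
    h₁, h₂, h₃, h₄, h₅, h₆, add_comm z, ← norm_neg (z - y), neg_sub]
  norm_num
  ring

end Polarization

theorem Orthonormal.snoc {𝕜 E : Type*} [RCLike 𝕜] [NormedAddCommGroup E] [InnerProductSpace 𝕜 E]
    {k : ℕ} {v : Fin k → E} (hv : Orthonormal 𝕜 v) {w : E} (hw : ‖w‖ = 1)
    (hvw : ∀ i, ⟪v i, w⟫_𝕜 = 0) : Orthonormal 𝕜 (Fin.snoc v w : Fin (k + 1) → E) := by
  refine ⟨fun i => ?_, fun i j hij => ?_⟩
  · cases i using Fin.lastCases <;> simp [hv.1, hw]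
  · cases i using Fin.lastCases <;> cases j using Fin.lastCases
    · exact absurd rfl hij
    · simpa [inner_eq_zero_symm] using hvw _
    · simpa using hvw _
    · simpa using hv.2 (fun h => hij (congrArg _ h))

theorem Submodule.mem_orthogonal_span_range_iff {𝕜 E ι : Type*} [RCLike 𝕜] [NormedAddCommGroup E]
    [InnerProductSpace 𝕜 E] {e : ι → E} {w : E} :
    w ∈ (span 𝕜 (Set.range e))ᗮ ↔ ∀ i, ⟪e i, w⟫_𝕜 = 0 := by
  rw [← span_singleton_le_iff_mem, ← isOrtho_iff_le, isOrtho_comm, isOrtho_span]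
  simp

theorem Fin.snoc_snoc_eq_update_left {α : Type*} {s : ℕ} (e : Fin s → α) (x y z : α) :
    (Fin.snoc (Fin.snoc e x) y : Fin (s + 2) → α)
      = Function.update (Fin.snoc (Fin.snoc e z) y) (Fin.last s).castSucc x := by
  rw [← Fin.snoc_update, Fin.update_snoc_last]

theorem Fin.snoc_snoc_eq_update_right {α : Type*} {s : ℕ} (e : Fin s → α) (x y z : α) :
    (Fin.snoc (Fin.snoc e x) y : Fin (s + 2) → α)
      = Function.update (Fin.snoc (Fin.snoc e x) z) (Fin.last (s + 1)) y := by
  rw [Fin.update_snoc_last]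

theorem Fin.lt_card_lt_pairs {m : ℕ} (hm : 4 ≤ m) :
    m < Fintype.card {p : Fin m × Fin m // p.1 < p.2} := by
  obtain ⟨k, rfl⟩ : ∃ k, m = k + 4 := ⟨m - 4, by omega⟩
  let pairs : Fin (k + 3) ⊕ Fin 2 → {p : Fin (k + 4) × Fin (k + 4) // p.1 < p.2} :=
    Sum.elim (fun j => ⟨(0, j.succ), Fin.succ_pos j⟩)
      (fun j => ⟨(1, ⟨j + 2, by omega⟩), by simp [Fin.lt_def]⟩)
  have hpairs : Function.Injective pairs := by
    rintro (i | i) (j | j) h <;> simp [pairs, Fin.ext_iff] at h ⊢ <;> omega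
  have := Fintype.card_le_of_injective pairs hpairs
  simp only [Fintype.card_sum, Fintype.card_fin] at this
  omega

section CrossVec

variable {V : Type*} [NormedAddCommGroup V] [InnerProductSpace ℂ V] [FiniteDimensional ℂ V]
  {r : ℕ} (φ : V [⋀^Fin (r + 1)]→ₗ[ℂ] ℂ)

/-- The vector `X(v₁, …, v_r)` representing `ι_{v₁ ∧ ⋯ ∧ v_r} φ` through the Hermitian metric. -/
noncomputable def crossVec (v : Fin r → V) : V :=
  (InnerProductSpace.toDual ℂ V).symm (contraction φ v)

theorem inner_crossVec (v : Fin r → V) (w : V) : ⟪crossVec φ v, w⟫_ℂ = φ (Fin.snoc v w) := by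
  simp [crossVec, contraction, Fin.update_snoc_last]

theorem IsCrossProduct.norm_crossVec {φ : V [⋀^Fin (r + 1)]→ₗ[ℂ] ℂ} (hφ : IsCrossProduct φ)
    {v : Fin r → V} (hv : Orthonormal ℂ v) : ‖crossVec φ v‖ = 1 := by
  rw [crossVec, LinearIsometryEquiv.norm_map, hφ v hv]

theorem crossVec_update_add (v : Fin r → V) (i : Fin r) (x y : V) :
    crossVec φ (Function.update v i (x + y))
      = crossVec φ (Function.update v i x) + crossVec φ (Function.update v i y) :=
  ext_inner_right ℂ fun w => by
    simp only [inner_add_left, inner_crossVec, Fin.snoc_update, AlternatingMap.map_update_add]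

theorem crossVec_update_smul (v : Fin r → V) (i : Fin r) (c : ℂ) (x : V) :
    crossVec φ (Function.update v i (c • x)) = conj c • crossVec φ (Function.update v i x) :=
  ext_inner_right ℂ fun w => by
    simp only [inner_smul_left, inner_crossVec, Fin.snoc_update, AlternatingMap.map_update_smul,
      Complex.conj_conj, smul_eq_mul]

theorem crossVec_eq_zero_of_eq {v : Fin r → V} {i j : Fin r} (h : v i = v j) (hij : i ≠ j) :
    crossVec φ v = 0 :=
  ext_inner_right ℂ fun w => by
    rw [inner_crossVec, inner_zero_left]
    exact φ.map_eq_zero_of_eq _ (i := i.castSucc) (j := j.castSucc) (by simpa using h)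
      (by simpa using hij)

end CrossVec

section CrossPair

variable {V : Type*} [NormedAddCommGroup V] [InnerProductSpace ℂ V] [FiniteDimensional ℂ V]
  {s : ℕ} (φ : V [⋀^Fin (s + 2 + 1)]→ₗ[ℂ] ℂ) (e : Fin s → V)

local notation "K" => (Submodule.span ℂ (Set.range e))ᗮ

noncomputable def crossPair : V →ₗ⋆[ℂ] V →ₗ⋆[ℂ] V :=
  LinearMap.mk₂'ₛₗ (starRingEnd ℂ) (starRingEnd ℂ)
    (fun x y => crossVec φ (Fin.snoc (Fin.snoc e x) y))
    (fun x x' y => by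
      rw [Fin.snoc_snoc_eq_update_left e (x + x') y 0, crossVec_update_add,
        ← Fin.snoc_snoc_eq_update_left, ← Fin.snoc_snoc_eq_update_left])
    (fun c x y => by
      rw [Fin.snoc_snoc_eq_update_left e (c • x) y 0, crossVec_update_smul,
        ← Fin.snoc_snoc_eq_update_left])
    (fun x y y' => by
      rw [Fin.snoc_snoc_eq_update_right e x (y + y') 0, crossVec_update_add,
        ← Fin.snoc_snoc_eq_update_right, ← Fin.snoc_snoc_eq_update_right])
    (fun c x y => by
      rw [Fin.snoc_snoc_eq_update_right e x (c • y) 0, crossVec_update_smul,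
        ← Fin.snoc_snoc_eq_update_right])

theorem crossPair_apply (x y : V) :
    crossPair φ e x y = crossVec φ (Fin.snoc (Fin.snoc e x) y) := rfl

theorem crossPair_self (x : V) : crossPair φ e x x = 0 :=
  crossVec_eq_zero_of_eq φ (i := (Fin.last s).castSucc) (j := Fin.last (s + 1)) (by simp)
    (Fin.castSucc_lt_last _).ne

theorem crossPair_swap (x y : V) : crossPair φ e y x = - crossPair φ e x y := by
  have := crossPair_self φ e (x + y)
  simp only [map_add, LinearMap.add_apply, crossPair_self, zero_add, add_zero] at this
  exact eq_neg_of_add_eq_zero_left this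

variable {φ e}

theorem crossPair_mem_orthogonal (x y : V) : crossPair φ e x y ∈ K := by
  refine Submodule.mem_orthogonal_span_range_iff.2 fun i => ?_
  rw [inner_eq_zero_symm, crossPair_apply, inner_crossVec]
  exact φ.map_eq_zero_of_eq _ (i := i.castSucc.castSucc.castSucc) (j := Fin.last (s + 2)) (by simp)
    (Fin.castSucc_lt_last _).ne

theorem IsCrossProduct.norm_crossPair (hφ : IsCrossProduct φ) (he : Orthonormal ℂ e) {x y : V}
    (hx : x ∈ K) (hy : y ∈ K) (hxy : ⟪x, y⟫_ℂ = 0) :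
    ‖crossPair φ e x y‖ = ‖x‖ * ‖y‖ := by
  rcases eq_or_ne x 0 with rfl | hx₀
  · simp
  rcases eq_or_ne y 0 with rfl | hy₀
  · simp
  set x' := (‖x‖⁻¹ : ℂ) • x
  set y' := (‖y‖⁻¹ : ℂ) • y
  have hx' : ‖x'‖ = 1 := by simp [x', norm_smul, hx₀]
  have hy' : ‖y'‖ = 1 := by simp [y', norm_smul, hy₀]
  have hon : Orthonormal ℂ (Fin.snoc (Fin.snoc e x') y' : Fin (s + 2) → V) := by
    refine (he.snoc hx' fun i => ?_).snoc hy' fun i => ?_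
    · simp [x', inner_smul_right, Submodule.mem_orthogonal_span_range_iff.1 hx i]
    · cases i using Fin.lastCases <;>
        simp [x', y', inner_smul_left, inner_smul_right, hxy,
          Submodule.mem_orthogonal_span_range_iff.1 hy]
  have h1 : ‖crossPair φ e x' y'‖ = 1 := hφ.norm_crossVec hon
  rw [map_smulₛₗ, LinearMap.map_smulₛₗ₂, norm_smul, norm_smul] at h1
  simp only [map_inv₀, Complex.conj_ofReal, norm_inv, Complex.norm_real, norm_norm] at h1
  field_simp at h1
  rw [h1, mul_comm]

theorem IsCrossProduct.inner_crossPair_crossPair_left (hφ : IsCrossProduct φ)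
    (he : Orthonormal ℂ e) {x y z : V} (hx : x ∈ K) (hy : y ∈ K) (hz : z ∈ K)
    (hxy : ⟪x, y⟫_ℂ = 0) (hxz : ⟪x, z⟫_ℂ = 0) :
    ⟪crossPair φ e x y, crossPair φ e x z⟫_ℂ = ‖x‖ ^ 2 * ⟪z, y⟫_ℂ := by
  refine inner_map_map_of_norm_map_eq_mul (crossPair φ e x) (U := K ⊓ (ℂ ∙ x)ᗮ)
    (fun u hu => ?_) ⟨hy, ?_⟩ ⟨hz, ?_⟩
  · exact hφ.norm_crossPair he hx hu.1 (Submodule.mem_orthogonal_singleton_iff_inner_right.1 hu.2)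
  · exact Submodule.mem_orthogonal_singleton_iff_inner_right.2 hxy
  · exact Submodule.mem_orthogonal_singleton_iff_inner_right.2 hxz

theorem IsCrossProduct.inner_crossPair_crossPair_eq_zero (hφ : IsCrossProduct φ)
    (he : Orthonormal ℂ e) {x₁ x₂ y₁ y₂ : V} (hx₁ : x₁ ∈ K) (hx₂ : x₂ ∈ K) (hy₁ : y₁ ∈ K)
    (hy₂ : y₂ ∈ K) (h₁₁ : ⟪x₁, y₁⟫_ℂ = 0) (h₁₂ : ⟪x₁, y₂⟫_ℂ = 0) (h₂₁ : ⟪x₂, y₁⟫_ℂ = 0)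
    (h₂₂ : ⟪x₂, y₂⟫_ℂ = 0) (hy : ⟪y₁, y₂⟫_ℂ = 0) :
    ⟪crossPair φ e x₁ y₁, crossPair φ e x₂ y₂⟫_ℂ = 0 := by
  have hy' : ⟪y₂, y₁⟫_ℂ = 0 := inner_eq_zero_symm.1 hy
  have diag : ∀ x ∈ K, ⟪x, y₁⟫_ℂ = 0 → ⟪x, y₂⟫_ℂ = 0 →
      ⟪crossPair φ e x y₁, crossPair φ e x y₂⟫_ℂ = 0 := fun x hx hxy₁ hxy₂ => by
    rw [hφ.inner_crossPair_crossPair_left he hx hy₁ hy₂ hxy₁ hxy₂, hy', mul_zero]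
  -- the sesquilinear form `x ↦ ⟪X(x, y₁), X(x, y₂)⟫` vanishes on the diagonal, hence identically
  have mix : ∀ c : ℂ, ⟪crossPair φ e (x₁ + c • x₂) y₁, crossPair φ e (x₁ + c • x₂) y₂⟫_ℂ = 0 :=
    fun c => diag _ (Submodule.add_mem _ hx₁ (Submodule.smul_mem _ c hx₂))
      (by simp [h₁₁, h₂₁]) (by simp [h₁₂, h₂₂])
  have h₁ := mix 1
  have hI := mix Complex.I
  simp only [map_add, LinearMap.map_smulₛₗ₂, LinearMap.add_apply, inner_add_left, inner_add_right,
    inner_smul_left, inner_smul_right, diag x₁ hx₁ h₁₁ h₁₂, diag x₂ hx₂ h₂₁ h₂₂] at h₁ hI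
  simp only [map_one, one_mul, zero_add, mul_zero, add_zero, Complex.conj_I, map_neg, neg_neg,
    neg_mul] at h₁ hI
  linear_combination (1 / 2 : ℂ) * h₁ + (Complex.I / 2) * hI
    + (⟪crossPair φ e x₁ y₁, crossPair φ e x₂ y₂⟫_ℂ - ⟪crossPair φ e x₂ y₁, crossPair φ e x₁ y₂⟫_ℂ)
      / 2 * Complex.I_sq

theorem IsCrossProduct.orthonormal_crossPair {ι : Type*} [LinearOrder ι] (hφ : IsCrossProduct φ)
    (he : Orthonormal ℂ e) {f : ι → V} (hf : Orthonormal ℂ f) (hfK : ∀ i, f i ∈ K) :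
    Orthonormal ℂ fun p : {p : ι × ι // p.1 < p.2} => crossPair φ e (f p.1.1) (f p.1.2) := by
  have inner_f {a b : ι} (hab : a ≠ b) : ⟪f a, f b⟫_ℂ = 0 := hf.2 hab
  have shared {a b c : ι} (hab : a ≠ b) (hac : a ≠ c) (hbc : b ≠ c) :
      ⟪crossPair φ e (f a) (f b), crossPair φ e (f a) (f c)⟫_ℂ = 0 := by
    rw [hφ.inner_crossPair_crossPair_left he (hfK a) (hfK b) (hfK c) (inner_f hab) (inner_f hac),
      inner_f hbc.symm, mul_zero]
  refine ⟨fun ⟨⟨a, b⟩, hab⟩ => ?_, ?_⟩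
  · rw [hφ.norm_crossPair he (hfK a) (hfK b) (inner_f hab.ne), hf.1, hf.1, mul_one]
  rintro ⟨⟨a, b⟩, hab⟩ ⟨⟨c, d⟩, hcd⟩ hne
  dsimp only at hab hcd ⊢
  rcases eq_or_ne a c with rfl | hac
  · exact shared hab.ne hcd.ne fun hbd => hne (by subst hbd; rfl)
  rcases eq_or_ne b d with rfl | hbd
  · rw [crossPair_swap φ e (f b) (f a), crossPair_swap φ e (f b) (f c), inner_neg_neg]
    exact shared hab.ne' hcd.ne' hac
  rcases eq_or_ne a d with rfl | had
  · rw [crossPair_swap φ e (f a) (f c), inner_neg_right,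
      shared hab.ne hcd.ne' fun hbc => (hab.trans (hbc ▸ hcd)).false, neg_zero]
  rcases eq_or_ne b c with rfl | hbc
  · rw [crossPair_swap φ e (f b) (f a), inner_neg_left, shared hab.ne' hcd.ne (hab.trans hcd).ne,
      neg_zero]
  exact hφ.inner_crossPair_crossPair_eq_zero he (hfK a) (hfK c) (hfK b) (hfK d) (inner_f hab.ne)
    (inner_f had) (inner_f hbc.symm) (inner_f hcd.ne) (inner_f hbd)

theorem IsCrossProduct.finrank_orthogonal_span_le_three (hφ : IsCrossProduct φ)
    (he : Orthonormal ℂ e) : finrank ℂ K ≤ 3 := by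
  by_contra! hK
  let b := stdOrthonormalBasis ℂ K
  have hg := hφ.orthonormal_crossPair he
    (b.orthonormal.comp_linearIsometry (Submodule.subtypeₗᵢ _)) fun i => (b i).2
  have hle :
      Fintype.card {p : Fin (finrank ℂ K) × Fin (finrank ℂ K) // p.1 < p.2} ≤ finrank ℂ K := by
    rw [← finrank_span_eq_card hg.linearIndependent]
    exact Submodule.finrank_mono (Submodule.span_le.2 (Set.range_subset_iff.2 fun _ =>
      crossPair_mem_orthogonal _ _))
  exact (Fin.lt_card_lt_pairs hK).not_ge hle

end CrossPair

theorem stmt_17_general (n r : ℕ) (hr1 : 2 ≤ r) (hr2 : r ≤ n - 2)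
    (V : Type*) [NormedAddCommGroup V] [InnerProductSpace ℂ V] [FiniteDimensional ℂ V]
    (hn : finrank ℂ V = n) :
    ¬ ∃ φ : V [⋀^Fin (r + 1)]→ₗ[ℂ] ℂ, IsCrossProduct φ := by
  rintro ⟨φ, hφ⟩
  obtain ⟨s, rfl⟩ : ∃ s, r = s + 2 := ⟨r - 2, by omega⟩
  let B := stdOrthonormalBasis ℂ V
  let e : Fin s → V := fun i => B (Fin.castLE (by omega) i)
  have he : Orthonormal ℂ e := B.orthonormal.comp _ (Fin.castLE_injective _)
  have hK := (Submodule.span ℂ (Set.range e)).finrank_add_finrank_orthogonal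
  rw [finrank_span_eq_card he.linearIndependent, Fintype.card_fin] at hK
  have hle := hφ.finrank_orthogonal_span_le_three he
  omega

/-- If `n ≥ 3` and `2 ≤ r ≤ n - 2`, then an `n`-dimensional complex Hermitian vector
space admits no complex `r`-fold vector cross product. -/
theorem stmt_17 (n r : ℕ) (hn3 : 3 ≤ n) (hr1 : 2 ≤ r) (hr2 : r ≤ n - 2)
    (V : Type*) [NormedAddCommGroup V] [InnerProductSpace ℂ V] [FiniteDimensional ℂ V]
    (hn : finrank ℂ V = n) :
    ¬ ∃ φ : V [⋀^Fin (r + 1)]→ₗ[ℂ] ℂ, IsCrossProduct φ :=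
  stmt_17_general n r hr1 hr2 V hn
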